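/- Let Q be a quasigroup of order 6. Every proper subsquare of Q can be generated by a triple of the form ({x, y}, {z}, ∅): that is, for every proper subsquare (S₁, S₂, S₃) of Q there exist x ≠ y in S₁ and z ∈ S₂ such that the smallest subsquare (T₁, T₂, T₃) with {x,y} ⊆ T₁ and {z} ⊆ T₂ equals (S₁, S₂, S₃). -/

import Mathlib

/-!
Let `r = |S₁| = |S₂| = |S₃|`. If a subsquare `U` sits inside a subsquare `S` and misses some
`y ∈ S₂`, then right multiplication by `y` maps `U₁` injectively into `S₃ \ U₃`, so
`2 |U| ≤ |S|`. Applied to `S` inside the whole quasigroup this gives `r ≤ 3`. Applied to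
`S ∩ T`, where `T` is any subsquare containing `x ≠ y` in its first part and `z` in its second,
it shows that `S ∩ T` cannot miss any element of `S₂`, since `2 · 2 > 3`; once `S₂ ⊆ T₂`, the
rest of `S` is forced into `T` by the quasigroup divisions.
-/

/-- A quasigroup: a binary operation with left and right division. -/
structure Quasigroup (Q : Type*) where
  mul : Q → Q → Q
  ldiv : Q → Q → Q
  rdiv : Q → Q → Q
  mul_ldiv : ∀ x z, mul x (ldiv x z) = z
  ldiv_mul : ∀ x y, ldiv x (mul x y) = y
  rdiv_mul : ∀ z y, mul (rdiv z y) y = z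
  mul_rdiv : ∀ x y, rdiv (mul x y) y = x

/-- `(S₁, S₂, S₃)` is a subsquare of the quasigroup `q`. -/
def IsSubsquare {Q : Type*} (q : Quasigroup Q) (S₁ S₂ S₃ : Set Q) : Prop :=
  (∀ x ∈ S₁, ∀ y ∈ S₂, q.mul x y ∈ S₃) ∧
  (∀ x ∈ S₁, ∀ z ∈ S₃, q.ldiv x z ∈ S₂) ∧
  (∀ z ∈ S₃, ∀ y ∈ S₂, q.rdiv z y ∈ S₁)

namespace Quasigroup

variable {Q : Type*} (q : Quasigroup Q)

theorem mul_right_injective (x : Q) : Function.Injective (q.mul x) :=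
  Function.LeftInverse.injective (q.ldiv_mul x)

theorem mul_left_injective (y : Q) : Function.Injective (fun x => q.mul x y) :=
  Function.LeftInverse.injective (g := fun z => q.rdiv z y) (q.mul_rdiv · y)

end Quasigroup

namespace IsSubsquare

variable {Q : Type*} {q : Quasigroup Q} {S₁ S₂ S₃ T₁ T₂ T₃ : Set Q}

theorem univ (q : Quasigroup Q) : IsSubsquare q Set.univ Set.univ Set.univ :=
  ⟨fun _ _ _ _ => trivial, fun _ _ _ _ => trivial, fun _ _ _ _ => trivial⟩

theorem inter (hS : IsSubsquare q S₁ S₂ S₃) (hT : IsSubsquare q T₁ T₂ T₃) :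
    IsSubsquare q (S₁ ∩ T₁) (S₂ ∩ T₂) (S₃ ∩ T₃) :=
  ⟨fun x hx y hy => ⟨hS.1 x hx.1 y hy.1, hT.1 x hx.2 y hy.2⟩,
    fun x hx z hz => ⟨hS.2.1 x hx.1 z hz.1, hT.2.1 x hx.2 z hz.2⟩,
    fun z hz y hy => ⟨hS.2.2 z hz.1 y hy.1, hT.2.2 z hz.2 y hy.2⟩⟩

theorem ncard₁_eq_ncard₃ (hS : IsSubsquare q S₁ S₂ S₃) {y : Q} (hy : y ∈ S₂) :
    S₁.ncard = S₃.ncard :=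
  Set.BijOn.ncard_eq <|
    Set.InvOn.bijOn (f' := fun z => q.rdiv z y)
      ⟨fun x _ => q.mul_rdiv x y, fun z _ => q.rdiv_mul z y⟩
      (fun x hx => hS.1 x hx y hy) (fun z hz => hS.2.2 z hz y hy)

theorem ncard₂_eq_ncard₃ (hS : IsSubsquare q S₁ S₂ S₃) {x : Q} (hx : x ∈ S₁) :
    S₂.ncard = S₃.ncard :=
  Set.BijOn.ncard_eq <|
    Set.InvOn.bijOn (f' := q.ldiv x) ⟨fun y _ => q.ldiv_mul x y, fun z _ => q.mul_ldiv x z⟩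
      (fun y hy => hS.1 x hx y hy) (fun z hz => hS.2.1 x hx z hz)

theorem subset₃_of_subset₂ (hS : IsSubsquare q S₁ S₂ S₃) (hT : IsSubsquare q T₁ T₂ T₃)
    {x : Q} (hx : x ∈ S₁ ∩ T₁) (h₂ : S₂ ⊆ T₂) : S₃ ⊆ T₃ := fun z hz =>
  q.mul_ldiv x z ▸ hT.1 x hx.2 _ (h₂ (hS.2.1 x hx.1 z hz))

theorem subset₁_of_subset₃ (hS : IsSubsquare q S₁ S₂ S₃) (hT : IsSubsquare q T₁ T₂ T₃)
    {y : Q} (hy : y ∈ S₂ ∩ T₂) (h₃ : S₃ ⊆ T₃) : S₁ ⊆ T₁ := fun x hx =>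
  q.mul_rdiv x y ▸ hT.2.2 _ (h₃ (hS.1 x hx y hy.1)) y hy.2

theorem two_mul_ncard_le [Finite Q] {U₁ U₂ U₃ : Set Q} (hU : IsSubsquare q U₁ U₂ U₃)
    (hS : IsSubsquare q S₁ S₂ S₃) (h₁ : U₁ ⊆ S₁) (h₃ : U₃ ⊆ S₃) {z y : Q} (hz : z ∈ U₂) (hyS : y ∈ S₂) (hyU : y ∉ U₂) : 2 * U₁.ncard ≤ S₁.ncard := by
  have hmaps : Set.MapsTo (fun v => q.mul v y) U₁ (S₃ \ U₃) := fun v hv =>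
    ⟨hS.1 v (h₁ hv) y hyS, fun hvy => hyU (q.ldiv_mul v y ▸ hU.2.1 v hv _ hvy)⟩
  have hle := Set.ncard_le_ncard_of_injOn _ hmaps (q.mul_left_injective y).injOn
  have hsplit := Set.ncard_sdiff_add_ncard_of_subset h₃
  rw [hU.ncard₁_eq_ncard₃ hz, hS.ncard₁_eq_ncard₃ hyS] at *
  omega

theorem two_mul_ncard_le_card [Finite Q] (hS : IsSubsquare q S₁ S₂ S₃) {z y : Q}
    (hz : z ∈ S₂) (hy : y ∉ S₂) : 2 * S₁.ncard ≤ Nat.card Q := by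
  simpa using hS.two_mul_ncard_le (univ q) (Set.subset_univ _) (Set.subset_univ _) hz
    (Set.mem_univ y) hy

theorem subset_of_ncard_lt_two_mul_ncard_inter [Finite Q] (hS : IsSubsquare q S₁ S₂ S₃)
    (hT : IsSubsquare q T₁ T₂ T₃) {x z : Q} (hx : x ∈ S₁ ∩ T₁) (hz : z ∈ S₂ ∩ T₂)
    (hcard : S₁.ncard < 2 * (S₁ ∩ T₁).ncard) : S₁ ⊆ T₁ ∧ S₂ ⊆ T₂ ∧ S₃ ⊆ T₃ := by
  have h₂ : S₂ ⊆ T₂ := fun y hyS => by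
    by_contra hyT
    have := (hS.inter hT).two_mul_ncard_le hS Set.inter_subset_left Set.inter_subset_left
      hz hyS fun hy => hyT hy.2
    omega
  have h₃ := hS.subset₃_of_subset₂ hT hx h₂
  exact ⟨hS.subset₁_of_subset₃ hT hz h₃, h₂, h₃⟩

end IsSubsquare

theorem proper_subsquare_generated_by_three_elements_general {Q : Type*} [Fintype Q]
    (hQ : Fintype.card Q = 6) (q : Quasigroup Q)
    (S₁ S₂ S₃ : Set Q) (hS : IsSubsquare q S₁ S₂ S₃)
    (h₂ : S₂.Nonempty)
    (hlow : 1 < S₁.ncard) (hhigh : S₁.ncard < 6) :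
    ∃ x y z : Q, x ≠ y ∧ x ∈ S₁ ∧ y ∈ S₁ ∧ z ∈ S₂ ∧
      ∀ T₁ T₂ T₃ : Set Q, IsSubsquare q T₁ T₂ T₃ →
        x ∈ T₁ → y ∈ T₁ → z ∈ T₂ → S₁ ⊆ T₁ ∧ S₂ ⊆ T₂ ∧ S₃ ⊆ T₃ := by
  obtain ⟨x, hx, y, hy, hxy⟩ := (Set.one_lt_ncard S₁.toFinite).mp hlow
  obtain ⟨z, hz⟩ := h₂
  have hcardQ : Nat.card Q = 6 := by rw [Nat.card_eq_fintype_card, hQ]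
  obtain ⟨w, hw⟩ : ∃ w, w ∉ S₂ := by
    by_contra! hall
    have h₂₃ := hS.ncard₂_eq_ncard₃ hx
    rw [Set.eq_univ_of_forall hall, Set.ncard_univ, hcardQ, ← hS.ncard₁_eq_ncard₃ hz] at h₂₃
    omega
  have hsmall := hS.two_mul_ncard_le_card hz hw
  refine ⟨x, y, z, hxy, hx, hy, hz, fun T₁ T₂ T₃ hT hxT hyT hzT => ?_⟩
  have hpair : 2 ≤ (S₁ ∩ T₁).ncard :=
    (Set.one_lt_ncard (Set.toFinite _)).mpr ⟨x, ⟨hx, hxT⟩, y, ⟨hy, hyT⟩, hxy⟩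
  exact hS.subset_of_ncard_lt_two_mul_ncard_inter hT ⟨hx, hxT⟩ ⟨hz, hzT⟩ (by omega)

/-- In a quasigroup of order 6, every proper subsquare `(S₁,S₂,S₃)` is
generated by a triple of the form `({x,y}, {z}, ∅)`: there are `x ≠ y` in
`S₁` and `z ∈ S₂` such that `(S₁,S₂,S₃)` is the smallest subsquare whose
first part contains `{x,y}` and whose second part contains `z`. -/
theorem proper_subsquare_generated_by_three_elements {Q : Type*} [Fintype Q]
    (hQ : Fintype.card Q = 6) (q : Quasigroup Q)
    (S₁ S₂ S₃ : Set Q) (hS : IsSubsquare q S₁ S₂ S₃)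
    (h₁ : S₁.Nonempty) (h₂ : S₂.Nonempty) (h₃ : S₃.Nonempty)
    (hlow : 1 < S₁.ncard) (hhigh : S₁.ncard < 6) :
    ∃ x y z : Q, x ≠ y ∧ x ∈ S₁ ∧ y ∈ S₁ ∧ z ∈ S₂ ∧
      ∀ T₁ T₂ T₃ : Set Q, IsSubsquare q T₁ T₂ T₃ →
        x ∈ T₁ → y ∈ T₁ → z ∈ T₂ → S₁ ⊆ T₁ ∧ S₂ ⊆ T₂ ∧ S₃ ⊆ T₃ :=
  proper_subsquare_generated_by_three_elements_general hQ q S₁ S₂ S₃ hS h₂ hlow hhigh
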